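/- For any abelian group A, any m ≥ 2, and functions V: (binary sequences) → A, U: (binary sequences) → A such that for all k ≤ m-2 and all S ∈ S_k: d(U(S)) = V(S⌢L) + V(S⌢R) - V(S), and such that V(S) = V(Sᵒᵖ) and U(S) = U(Sᵒᵖ) for all S, the element W + d(Σ_{k=0}^{m-2} Σ_{S ∈ S_k, S(0)=L or k=0} c_k U(S)) equals 2 Σ_{T ∈ S_{m-1}, T(0)=L} V(T), where W = V(∅), c_0 = 1 and c_k = 2 for k ≥ 1. -/
import Mathlib

open Finset

private lemma snoc_sum {A : Type*} [AddCommMonoid A] (k : ℕ) (hk : 1 ≤ k)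
    (f : (Fin (k+1) → Bool) → A) :
    ∑ T ∈ Finset.univ.filter
        (fun T : Fin (k+1) → Bool => ∀ i : Fin (k+1), (i : ℕ) = 0 → T i = true), f T
    = ∑ S ∈ Finset.univ.filter
        (fun S : Fin k → Bool => ∀ i : Fin k, (i : ℕ) = 0 → S i = true),
        (f (Fin.snoc S true) + f (Fin.snoc S false)) := by
  have h : ∀ S ∈ Finset.univ.filter
        (fun S : Fin k → Bool => ∀ i : Fin k, (i : ℕ) = 0 → S i = true),
      (f (Fin.snoc S true) + f (Fin.snoc S false)) = ∑ b : Bool, f (Fin.snoc S b) := by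
    intro S _
    simp [Fintype.sum_bool]
  rw [Finset.sum_congr rfl h, ← Finset.sum_product']
  refine (Finset.sum_nbij' (fun p => Fin.snoc p.1 p.2)
    (fun T => (Fin.init T, T (Fin.last k))) ?_ ?_ ?_ ?_ ?_).symm
  · intro p hp
    simp only [Finset.mem_product, Finset.mem_filter, Finset.mem_univ, true_and] at hp ⊢
    intro i hi
    have hne : (i : ℕ) < k := by omega
    have : i = Fin.castSucc ⟨0, by omega⟩ := by
      ext; simpa using hi
    rw [this, Fin.snoc_castSucc]
    exact hp.1 _ rfl
  · intro T hT
    simp only [Finset.mem_filter, Finset.mem_univ, true_and, Finset.mem_product] at hT ⊢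
    refine ⟨fun i hi => ?_, trivial⟩
    simpa [Fin.init] using hT i.castSucc (by simpa using hi)
  · intro p _
    simp
  · intro T _
    exact Fin.snoc_init_self T
  · intro p _; rfl

/-- Abstract form of the main theorem: given the telescoping identity
`d(U(S)) = V(S⌢L) + V(S⌢R) - V(S)` for sequences of length `k ≤ m-2` and the
opposite-sequence symmetry of `U` and `V`, the element
`W + d(Σ_{k=0}^{m-2} Σ_{S ∈ S_k, S(0)=L or k=0} c_k U(S))`, with `W = V(∅)`, `c_0 = 1`
and `c_k = 2` for `k ≥ 1`, equals `2 Σ_{T ∈ S_{m-1}, T(0)=L} V(T)`. (`L := true`.) -/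
theorem main_theorem_abstract (A : Type*) [AddCommGroup A] (m : ℕ) (hm : 2 ≤ m)
    (d : A →+ A) (V U : ∀ k : ℕ, (Fin k → Bool) → A)
    (htel : ∀ k : ℕ, k ≤ m - 2 → ∀ S : Fin k → Bool,
      d (U k S) = V (k + 1) (Fin.snoc S true) + V (k + 1) (Fin.snoc S false) - V k S)
    (hVop : ∀ k : ℕ, ∀ S : Fin k → Bool, V k S = V k (fun i => !(S i)))
    (hUop : ∀ k : ℕ, ∀ S : Fin k → Bool, U k S = U k (fun i => !(S i)))
    (W : A) (hW : W = V 0 (fun i => i.elim0)) :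
    W + d (∑ k ∈ Finset.range (m - 1),
        ∑ S ∈ Finset.univ.filter
            (fun S : Fin k → Bool => ∀ i : Fin k, (i : ℕ) = 0 → S i = true),
          (if k = 0 then 1 else 2) • U k S)
      = 2 • ∑ T ∈ Finset.univ.filter
            (fun T : Fin (m - 1) → Bool => T ⟨0, by omega⟩ = true),
          V (m - 1) T := by
  have hfilter0 : (Finset.univ.filter
      (fun S : Fin 0 → Bool => ∀ i : Fin 0, (i : ℕ) = 0 → S i = true))
      = {(fun i => i.elim0 : Fin 0 → Bool)} := by
    ext S
    simp only [Finset.mem_filter, Finset.mem_univ, true_and, Finset.mem_singleton]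
    constructor
    · intro _; funext i; exact i.elim0
    · intro _ i; exact i.elim0
  set P : ℕ → A := fun k => ∑ S ∈ Finset.univ.filter
      (fun S : Fin k → Bool => ∀ i : Fin k, (i : ℕ) = 0 → S i = true), V k S with hP
  have hP0 : P 0 = W := by
    simp only [hP]
    rw [hfilter0, Finset.sum_singleton, hW]
  -- the base telescoping step
  have hbase : d (U 0 (fun i => i.elim0)) = 2 • P 1 - P 0 := by
    have hsym : V 1 (Fin.snoc (fun i => i.elim0) false)
        = V 1 (Fin.snoc (fun i => i.elim0) true) := by
      rw [hVop]
      congr 1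
    have hP1 : P 1 = V 1 (Fin.snoc (fun i => i.elim0) true) := by
      have hf : (Finset.univ.filter
          (fun T : Fin 1 → Bool => ∀ i : Fin 1, (i : ℕ) = 0 → T i = true))
          = {(fun _ => true : Fin 1 → Bool)} := by decide
      simp only [hP]
      rw [hf, Finset.sum_singleton]
      congr 1
    rw [htel 0 (by omega), hsym, hP1, hP0, hW, two_smul]
  -- the inductive telescoping step, for k ≥ 1
  have hstep : ∀ k : ℕ, 1 ≤ k → k ≤ m - 2 →
      d (∑ S ∈ Finset.univ.filter
          (fun S : Fin k → Bool => ∀ i : Fin k, (i : ℕ) = 0 → S i = true), U k S)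
      = P (k+1) - P k := by
    intro k hk1 hk2
    rw [map_sum]
    have h1 : ∀ S ∈ Finset.univ.filter
        (fun S : Fin k → Bool => ∀ i : Fin k, (i : ℕ) = 0 → S i = true),
        d (U k S) = (V (k+1) (Fin.snoc S true) + V (k+1) (Fin.snoc S false)) - V k S := by
      intro S _; exact htel k hk2 S
    rw [Finset.sum_congr rfl h1, Finset.sum_sub_distrib]
    simp only [hP]
    rw [snoc_sum k hk1 (V (k+1))]
  -- telescoping induction
  have main : ∀ n : ℕ, 1 ≤ n → n ≤ m - 1 →
      W + d (∑ k ∈ Finset.range n,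
        ∑ S ∈ Finset.univ.filter
            (fun S : Fin k → Bool => ∀ i : Fin k, (i : ℕ) = 0 → S i = true),
          (if k = 0 then 1 else 2) • U k S) = 2 • P n := by
    intro n
    induction n with
    | zero => omega
    | succ n ih =>
      intro _ hn
      rcases Nat.lt_or_ge 1 (n + 1) with h1 | h1
      · have hn1 : 1 ≤ n := by omega
        rw [Finset.sum_range_succ, map_add, ← add_assoc,
          ih hn1 (by omega)]
        have hne : n ≠ 0 := by omega
        rw [if_neg hne, ← Finset.smul_sum, map_nsmul, hstep n hn1 (by omega),
          smul_sub]
        abel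
      · have hn0 : n = 0 := by omega
        subst hn0
        rw [Finset.range_one, Finset.sum_singleton, hfilter0, Finset.sum_singleton]
        norm_num
        rw [hbase, hP0]
        abel
  have hgoal := main (m - 1) (by omega) le_rfl
  rw [hgoal]
  simp only [hP]
  congr 1
  apply Finset.sum_congr _ (fun _ _ => rfl)
  apply Finset.filter_congr
  intro T _
  constructor
  · intro h; exact h ⟨0, by omega⟩ rfl
  · intro h i hi
    have : i = ⟨0, by omega⟩ := by ext; simpa using hi
    rw [this]; exact h
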